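/- Let a, A : ℤ^m → ℤ be the (finitely supported) coefficient functions defined by ∏_{1≤i<j≤m}(1 − x_i/x_j) · ∏_{1≤r<s≤m}(1 − 1/(x_r x_s)) = Σ_{γ∈ℤ^m} a(γ) x^γ and ∏_{1≤i<j≤m}(1 − x_i/x_j) · ∏_{1≤r≤s≤m}(1 − 1/(x_r x_s)) = Σ_{γ∈ℤ^m} A(γ) x^γ. Then for every g ∈ {B_m, C_m, D_m} and every β ∈ ℤ^m: v_β^g = Σ_{γ∈ℤ^m} a(γ) e^g_{β+γ} and v_β^g = Σ_{γ∈ℤ^m} A(γ) E^g_{β+γ}. -/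

import Mathlib

open scoped BigOperators

noncomputable section

/-- Integral weights of rank `m`, identified with `ℤ^m`. -/
abbrev Wt (m : ℕ) := Fin m → ℤ

/-- Rational weights of rank `m` (needed for the half-integral `ρ` of type `B`). -/
abbrev QWt (m : ℕ) := Fin m → ℚ

/-- Coercion of an integral weight to a rational weight. -/
def castWt {m : ℕ} (β : Wt m) : QWt m := fun i => (β i : ℚ)

/-- The standard basis vector `ε_i` of `ℤ^m`. -/
def eps {m : ℕ} (i : Fin m) : Wt m := fun j => if j = i then 1 else 0

/-- `ρ_m = (m, m-1, ..., 1)`. -/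
def rhoZ (m : ℕ) : Wt m := fun i => (m : ℤ) - (i : ℕ)

/-- `κ_m = (1, ..., 1)`. -/
def kappa (m : ℕ) : Wt m := fun _ => 1

/-- A partition of length `m`: a weakly decreasing element of `ℕ^m` (written in `ℤ^m`). -/
def IsPart {m : ℕ} (lam : Wt m) : Prop := Antitone lam ∧ ∀ i, 0 ≤ lam i

/-- `|λ| = λ_1 + ⋯ + λ_m`. -/
def wtSum {m : ℕ} (lam : Wt m) : ℤ := ∑ i, lam i

/-- The conjugate partition, regarded as a partition of length `n`:
`λ'_j = #{i : λ_i ≥ j}` (with `j` one-based). -/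
def conj {m : ℕ} (n : ℕ) (lam : Wt m) : Wt n :=
  fun j => ((Finset.univ.filter (fun i : Fin m => ((j : ℕ) : ℤ) < lam i)).card : ℤ)

/-- The permutation action of `S_m` on `ℤ^m`. -/
def pact {m : ℕ} (σ : Equiv.Perm (Fin m)) (β : Wt m) : Wt m := β ∘ σ.symm

/-- The permutation action of `S_m` on `ℚ^m`. -/
def qpact {m : ℕ} (σ : Equiv.Perm (Fin m)) (β : QWt m) : QWt m := β ∘ σ.symm

/-- The dot action `σ ∘ α = σ(α + ρ_m) - ρ_m`. -/
def dotAct {m : ℕ} (σ : Equiv.Perm (Fin m)) (α : Wt m) : Wt m :=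
  pact σ (α + rhoZ m) - rhoZ m

/-- The three root-system types considered in the paper. -/
inductive RT | B | C | D
deriving DecidableEq

/-- The action of a signed permutation `(σ, ε)` on `ℚ^m`: the hyperoctahedral group
`W_{B_m} = W_{C_m}` consists of all such pairs. -/
def sact {m : ℕ} (σ : Equiv.Perm (Fin m)) (ε : Fin m → Bool) (β : QWt m) : QWt m :=
  fun i => (if ε i then -1 else 1) * β (σ.symm i)

/-- `(-1)^{l(w)}` for a signed permutation `w = (σ, ε)`: the sign character of the
hyperoctahedral group, which takes value `-1` on each Coxeter generator. -/
def ssign {m : ℕ} (σ : Equiv.Perm (Fin m)) (ε : Fin m → Bool) : ℤ :=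
  (Equiv.Perm.sign σ : ℤ) * ∏ i, (if ε i then -1 else 1)

/-- Which signed permutations belong to the Weyl group of type `g`: for `B` and `C` all of
them, for `D` only those changing an even number of signs. -/
def allowed (g : RT) {m : ℕ} (ε : Fin m → Bool) : Prop :=
  g = RT.D → (∏ i, (if ε i then (-1 : ℤ) else 1)) = 1

instance (g : RT) {m : ℕ} : DecidablePred (allowed g (m := m)) := by
  unfold allowed; infer_instance

/-- The Laurent polynomial ring `ℤ[x_1^{±1/2}, ..., x_m^{±1/2}]` (allowing all rational
exponents), realized as the group algebra of `ℚ^m`. -/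
abbrev LQ (m : ℕ) := AddMonoidAlgebra ℤ (QWt m)

/-- The monomial `x^β`. -/
def XQ {m : ℕ} (β : QWt m) : LQ m := AddMonoidAlgebra.single β 1

instance {m : ℕ} : IsDomain (LQ m) := NoZeroDivisors.to_isDomain _

/-- The fraction field of the Laurent polynomial ring, in which Schur functions live. -/
abbrev KK (m : ℕ) := FractionRing (LQ m)

def toK {m : ℕ} (p : LQ m) : KK m := algebraMap (LQ m) (KK m) p

/-- The half-sum of positive roots: `ρ_B = ρ_m - (1/2,…,1/2)`, `ρ_C = ρ_m`,
`ρ_D = ρ_m - (1,…,1)`. -/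
def rhoG (g : RT) (m : ℕ) : QWt m :=
  match g with
  | RT.B => fun i => ((m : ℚ) - (i : ℕ)) - 1/2
  | RT.C => fun i => (m : ℚ) - (i : ℕ)
  | RT.D => fun i => ((m : ℚ) - (i : ℕ)) - 1

/-- `a_β = Σ_{w ∈ W_g} (-1)^{l(w)} x^{w(β)}`. -/
def aalt (g : RT) {m : ℕ} (β : QWt m) : LQ m :=
  ∑ σ : Equiv.Perm (Fin m), ∑ ε ∈ Finset.univ.filter (allowed g),
    ssign σ ε • XQ (sact σ ε β)

/-- The Schur function `s_ν^g = a_{ν+ρ_g} / a_{ρ_g}`. -/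
def SchurF (g : RT) {m : ℕ} (ν : QWt m) : KK m :=
  toK (aalt g (ν + rhoG g m)) / toK (aalt g (rhoG g m))

/-- The one-row weight `(k, 0, …, 0)`. -/
def rowWt (m : ℕ) (k : ℤ) : QWt m := fun i => if (i : ℕ) = 0 then (k : ℚ) else 0

/-- The one-column weight `(1^p, 0^{m-p})`. -/
def colWt (m : ℕ) (p : ℤ) : QWt m := fun i => if ((i : ℕ) : ℤ) < p then 1 else 0

/-- `h_k^g = s_{(k,0,…,0)}^g` for `k ≥ 0`, and `0` for `k < 0`. -/
def hF (g : RT) (m : ℕ) (k : ℤ) : KK m := if 0 ≤ k then SchurF g (rowWt m k) else 0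

/-- `H_k^g = h_k^g + h_{k-2}^g + ⋯ + h_{k mod 2}^g` for `k ≥ 0`, and `0` for `k < 0`. -/
def HF (g : RT) (m : ℕ) (k : ℤ) : KK m :=
  if 0 ≤ k then ∑ j ∈ Finset.range (k.toNat / 2 + 1), hF g m (k - 2 * j) else 0

/-- `e_p^g = s^g_{(1^p,0^{m-p})}` for `0 ≤ p ≤ m`, `e_p^g = e^g_{2m-p}` for `m < p ≤ 2m`,
and `0` otherwise. -/
def eF (g : RT) (m : ℕ) (p : ℤ) : KK m :=
  if 0 ≤ p ∧ p ≤ (m : ℤ) then SchurF g (colWt m p)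
  else if (m : ℤ) < p ∧ p ≤ 2 * m then SchurF g (colWt m (2 * m - p))
  else 0

/-- `E_k^g = e_k^g + e_{k-2}^g + ⋯ + e_{k mod 2}^g` for `k ≥ 0`, and `0` for `k < 0`. -/
def EF (g : RT) (m : ℕ) (k : ℤ) : KK m :=
  if 0 ≤ k then ∑ j ∈ Finset.range (k.toNat / 2 + 1), eF g m (k - 2 * j) else 0

/-- The `m × m` determinant `u_α^g` (in the one-row characters `h^g`). -/
def uDet (g : RT) {m : ℕ} (α : Wt m) : KK m :=
  Matrix.det (Matrix.of fun i j : Fin m =>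
    if (j : ℕ) = 0 then hF g m (α i - (i : ℕ))
    else hF g m (α i - (i : ℕ) + (j : ℕ)) + hF g m (α i - (i : ℕ) - (j : ℕ)))

/-- The `n × n` determinant `v_β^g` (in the one-column characters `e^g` of rank `m`). -/
def vDet (g : RT) (m : ℕ) {n : ℕ} (β : Wt n) : KK m :=
  Matrix.det (Matrix.of fun i j : Fin n =>
    if (j : ℕ) = 0 then eF g m (β i - (i : ℕ))
    else eF g m (β i - (i : ℕ) + (j : ℕ)) + eF g m (β i - (i : ℕ) - (j : ℕ)))

/-- `h_α^g = h^g_{α_1} ⋯ h^g_{α_m}` (and similarly for arbitrary index length). -/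
def hProd (g : RT) (m : ℕ) {n : ℕ} (α : Wt n) : KK m := ∏ i, hF g m (α i)

def HProd (g : RT) (m : ℕ) {n : ℕ} (α : Wt n) : KK m := ∏ i, HF g m (α i)

def eProd (g : RT) (m : ℕ) {n : ℕ} (α : Wt n) : KK m := ∏ i, eF g m (α i)

def EProd (g : RT) (m : ℕ) {n : ℕ} (α : Wt n) : KK m := ∏ i, EF g m (α i)

/-- The Laurent polynomial ring `ℤ[x_1^{±1}, ..., x_m^{±1}]`, realized as the group
algebra of `ℤ^m`. -/
abbrev LZ (m : ℕ) := AddMonoidAlgebra ℤ (Wt m)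

/-- The monomial `x^β`. -/
def XZ {m : ℕ} (β : Wt m) : LZ m := AddMonoidAlgebra.single β 1

/-- `φ_m = ∏_{1≤i<j≤m} (1 - x_i/x_j) · ∏_{1≤r<s≤m} (1 - 1/(x_r x_s))`; its coefficients
are the function `a` (resp. `f_{q=1}` up to expansion conventions). -/
def phiSmall (m : ℕ) : LZ m :=
  (∏ p ∈ Finset.univ.filter (fun p : Fin m × Fin m => p.1 < p.2),
      (1 - XZ (eps p.1 - eps p.2))) *
  (∏ p ∈ Finset.univ.filter (fun p : Fin m × Fin m => p.1 < p.2),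
      (1 - XZ (-(eps p.1 + eps p.2))))

/-- `Φ_m = ∏_{1≤i<j≤m} (1 - x_i/x_j) · ∏_{1≤r≤s≤m} (1 - 1/(x_r x_s))`. -/
def phiBig (m : ℕ) : LZ m :=
  (∏ p ∈ Finset.univ.filter (fun p : Fin m × Fin m => p.1 < p.2),
      (1 - XZ (eps p.1 - eps p.2))) *
  (∏ p ∈ Finset.univ.filter (fun p : Fin m × Fin m => p.1 ≤ p.2),
      (1 - XZ (-(eps p.1 + eps p.2))))

/-- The coefficient `a(γ)` of `x^γ` in `φ_m`. -/
def coeffSmall (m : ℕ) (γ : Wt m) : ℤ := (phiSmall m).coeff γ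

/-- The coefficient `A(γ)` of `x^γ` in `Φ_m`. -/
def coeffBig (m : ℕ) (γ : Wt m) : ℤ := (phiBig m).coeff γ

/-- The generic `q`-partition function attached to a finite family `v` of vectors:
the coefficient of `q^d` counts the families `(n_i)` of nonnegative integers with
`Σ n_i = d` and `Σ n_i v_i = β`.  This encodes the coefficient of `x^β` in the formal
series expansion of `∏_i (1 - q x^{v_i})^{-1}` as a power series in `q`. -/
def PqPS {m : ℕ} {ι : Type} [Fintype ι] (v : ι → Wt m) (β : QWt m) : PowerSeries ℤ :=
  PowerSeries.mk fun d =>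
    (Nat.card {n : ι → ℕ // (∑ i, n i) = d ∧ castWt (∑ i, (n i : ℤ) • v i) = β} : ℤ)

/-- The specialization at `q = 1` of `PqPS`: the number of ways to write `β` as a
nonnegative integral combination of the vectors `v_i`. -/
def POne {m : ℕ} {ι : Type} [Fintype ι] (v : ι → Wt m) (β : Wt m) : ℤ :=
  (Nat.card {n : ι → ℕ // (∑ i, (n i : ℤ) • v i) = β} : ℤ)

/-- Index type for the pairs `1 ≤ i < j ≤ m`. -/
abbrev IdxLT (m : ℕ) := {p : Fin m × Fin m // p.1 < p.2}

/-- Index type for the pairs `1 ≤ i ≤ j ≤ m`. -/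
abbrev IdxLE (m : ℕ) := {p : Fin m × Fin m // p.1 ≤ p.2}

/-- The positive roots `ε_i - ε_j` (`i < j`) of type `A_m`. -/
def rootsA (m : ℕ) : IdxLT m → Wt m := fun p => eps p.1.1 - eps p.1.2

/-- The positive roots of type `B_m`. -/
def rootsB (m : ℕ) : IdxLT m ⊕ IdxLT m ⊕ Fin m → Wt m
  | .inl p => eps p.1.1 - eps p.1.2
  | .inr (.inl p) => eps p.1.1 + eps p.1.2
  | .inr (.inr i) => eps i

/-- The positive roots of type `C_m` (note `2ε_i = ε_i + ε_i`). -/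
def rootsC (m : ℕ) : IdxLT m ⊕ IdxLE m → Wt m
  | .inl p => eps p.1.1 - eps p.1.2
  | .inr p => eps p.1.1 + eps p.1.2

/-- The positive roots of type `D_m`. -/
def rootsD (m : ℕ) : IdxLT m ⊕ IdxLT m → Wt m
  | .inl p => eps p.1.1 - eps p.1.2
  | .inr p => eps p.1.1 + eps p.1.2

/-- The vectors `ε_i - ε_j` (`i < j`) and `-(ε_r + ε_s)` (`r < s`), whose `q`-partition
function is `f_q`. -/
def vfSmall (m : ℕ) : IdxLT m ⊕ IdxLT m → Wt m
  | .inl p => eps p.1.1 - eps p.1.2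
  | .inr p => -(eps p.1.1 + eps p.1.2)

/-- The vectors `ε_i - ε_j` (`i < j`) and `-(ε_r + ε_s)` (`r ≤ s`), whose `q`-partition
function is `F_q`. -/
def vfBig (m : ℕ) : IdxLT m ⊕ IdxLE m → Wt m
  | .inl p => eps p.1.1 - eps p.1.2
  | .inr p => -(eps p.1.1 + eps p.1.2)

/-- `f_q`. -/
def fq {m : ℕ} (β : Wt m) : PowerSeries ℤ := PqPS (vfSmall m) (castWt β)

/-- `F_q`. -/
def Fq {m : ℕ} (β : Wt m) : PowerSeries ℤ := PqPS (vfBig m) (castWt β)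

/-- The `q`-analogue of Kostant's partition function, type `A_m`. -/
def PqA {m : ℕ} (β : QWt m) : PowerSeries ℤ := PqPS (rootsA m) β

/-- The `q`-analogue of Kostant's partition function, types `B_m`, `C_m`, `D_m`. -/
def PqG (g : RT) {m : ℕ} (β : QWt m) : PowerSeries ℤ :=
  match g with
  | RT.B => PqPS (rootsB m) β
  | RT.C => PqPS (rootsC m) β
  | RT.D => PqPS (rootsD m) β

/-- The Kostka–Foulkes polynomial
`K^g_{λ,μ}(q) = Σ_{w ∈ W_g} (-1)^{l(w)} P_q^g(w(λ+ρ_g) - (μ+ρ_g))`. -/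
def KF (g : RT) {m : ℕ} (lam mu : QWt m) : PowerSeries ℤ :=
  ∑ σ : Equiv.Perm (Fin m), ∑ ε ∈ Finset.univ.filter (allowed g),
    ssign σ ε • PqG g (sact σ ε (lam + rhoG g m) - (mu + rhoG g m))

/-- The Kostka–Foulkes polynomial of type `A_m`,
`K^{A_m}_{λ,γ}(q) = Σ_{σ ∈ S_m} (-1)^{l(σ)} P_q^{A_m}(σ(λ+ρ_m) - (γ+ρ_m))`,
defined for arbitrary `γ ∈ ℤ^m`. -/
def KFA {m : ℕ} (lam gamma : Wt m) : PowerSeries ℤ :=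
  ∑ σ : Equiv.Perm (Fin m),
    (Equiv.Perm.sign σ : ℤ) • PqA (castWt (pact σ (lam + rhoZ m) - (gamma + rhoZ m)))

/-- `u_{λ,μ}(q) = Σ_{σ ∈ S_m} (-1)^{l(σ)} f_q(σ(λ+ρ_m) - μ - ρ_m)`. -/
def uP {m : ℕ} (lam mu : Wt m) : PowerSeries ℤ :=
  ∑ σ : Equiv.Perm (Fin m),
    (Equiv.Perm.sign σ : ℤ) • fq (pact σ (lam + rhoZ m) - mu - rhoZ m)

/-- `U_{λ,μ}(q) = Σ_{σ ∈ S_m} (-1)^{l(σ)} F_q(σ(λ+ρ_m) - μ - ρ_m)`. -/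
def UP {m : ℕ} (lam mu : Wt m) : PowerSeries ℤ :=
  ∑ σ : Equiv.Perm (Fin m),
    (Equiv.Perm.sign σ : ℤ) • Fq (pact σ (lam + rhoZ m) - mu - rhoZ m)

/-- `f_q` specialized at `q = 1`. -/
def fOne {m : ℕ} (β : Wt m) : ℤ := POne (vfSmall m) β

/-- `F_q` specialized at `q = 1`. -/
def FOne {m : ℕ} (β : Wt m) : ℤ := POne (vfBig m) β

/-- `u_{λ,μ}(1)`. -/
def uP1 {m : ℕ} (lam mu : Wt m) : ℤ :=
  ∑ σ : Equiv.Perm (Fin m),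
    (Equiv.Perm.sign σ : ℤ) * fOne (pact σ (lam + rhoZ m) - mu - rhoZ m)

/-- `U_{λ,μ}(1)`. -/
def UP1 {m : ℕ} (lam mu : Wt m) : ℤ :=
  ∑ σ : Equiv.Perm (Fin m),
    (Equiv.Perm.sign σ : ℤ) * FOne (pact σ (lam + rhoZ m) - mu - rhoZ m)

/-- `λ̂ = (n - λ_m, …, n - λ_1)`. -/
def hatP {m : ℕ} (n : ℤ) (lam : Wt m) : Wt m := fun i => n - lam i.rev

/-- The involution `I(α_1, …, α_m) = (-α_m, …, -α_1)`. -/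
def invI {m : ℕ} (α : Wt m) : Wt m := fun i => -α i.rev

/-- `σ*`, defined by `σ*(k) = σ(m - k + 1)`. -/
def starPerm {m : ℕ} (σ : Equiv.Perm (Fin m)) : Equiv.Perm (Fin m) :=
  (Fin.revPerm).trans σ

/-- The number of ways to write `β = Σ_{1≤r≤s≤m} e_{r,s} (ε_r + ε_s)`, `e_{r,s} ∈ ℕ`. -/
def cC (m : ℕ) (β : Wt m) : ℕ :=
  Nat.card {e : IdxLE m → ℕ // (∑ p, (e p : ℤ) • (eps p.1.1 + eps p.1.2)) = β}

/-- The number of ways to write `β = Σ_{1≤r<s≤m} e_{r,s} (ε_r + ε_s)`, `e_{r,s} ∈ ℕ`. -/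
def cD (m : ℕ) (β : Wt m) : ℕ :=
  Nat.card {e : IdxLT m → ℕ // (∑ p, (e p : ℤ) • (eps p.1.1 + eps p.1.2)) = β}

/-- The set `C_k^m`. -/
def setC (m k : ℕ) : Set (Wt m) :=
  {β | (∃ e : IdxLE m → ℕ, (∑ p, (e p : ℤ) • (eps p.1.1 + eps p.1.2)) = β) ∧
       wtSum β = 2 * k}

/-- The set `D_k^m`. -/
def setD (m k : ℕ) : Set (Wt m) :=
  {β | (∃ e : IdxLT m → ℕ, (∑ p, (e p : ℤ) • (eps p.1.1 + eps p.1.2)) = β) ∧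
       wtSum β = 2 * k}

/-! With `Y_k = x_k + x_k⁻¹` one has `(1 - x_i/x_j)(1 - 1/(x_i x_j)) = x_j⁻¹ (Y_j - Y_i)`, so
`φ_m = ∏_j x_j^{-j} · ∏_{i<j} (Y_j - Y_i)` (indices from `0`). Since `x^j + x^{-j}` is the monic
Dickson polynomial `D_j` evaluated at `x + x⁻¹`, column operations turn the Vandermonde determinant
in the `Y_k` into `det (x_r^j + x_r^{-j})` (with `1` in column `0`), hence
`φ_m = det (x_r^{-r} (x_r^j + x_r^{-j}))`. Every entry of this matrix involves a single variable,
and `x^γ ↦ e_{β+γ} = ∏_k e_{β_k+γ_k}` is multiplicative across different variables, so this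
linear map can be applied entrywise in the Leibniz expansion; it sends the entry in row `r`,
column `j` to `e_{β_r-r+j} + e_{β_r-r-j}`, the corresponding entry of `v_β`. For
`Φ_m = φ_m ∏_k (1 - x_k^{-2})` the extra factor goes into row `k`, and the map `x^γ ↦ E_{β+γ}`
treats it the same way because `E_a - E_{a-2} = e_a`. -/

open Finset

section Dickson

open Polynomial

variable {R : Type*} [CommRing R] [Nontrivial R]

lemma dickson_one_one_succ_monic_natDegree (n : ℕ) :
    (dickson 1 (1 : R) (n + 1)).Monic ∧ (dickson 1 (1 : R) (n + 1)).natDegree = n + 1 ∧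
      (dickson 1 (1 : R) n).natDegree ≤ n := by
  induction n with
  | zero => exact ⟨monic_X, natDegree_X, by norm_num [dickson_zero]⟩
  | succ n ih =>
    obtain ⟨hmonic, hdeg, hle⟩ := ih
    have hXmonic : (X * dickson 1 (1 : R) (n + 1)).Monic := monic_X.mul hmonic
    have hXdeg : (X * dickson 1 (1 : R) (n + 1)).natDegree = n + 2 := by
      rw [monic_X.natDegree_mul hmonic, natDegree_X, hdeg]; omega
    have hlt :
        (C (1 : R) * dickson 1 1 n).natDegree < (X * dickson 1 (1 : R) (n + 1)).natDegree := by
      rw [C_1, one_mul, hXdeg]; omega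
    rw [dickson_add_two]
    refine ⟨hXmonic.sub_of_left (degree_lt_degree hlt), ?_, hdeg.le⟩
    rw [natDegree_sub_eq_left_of_natDegree_lt hlt, hXdeg]

end Dickson

section PairProducts

variable {α M : Type*} [Fintype α] [LinearOrder α] [CommMonoid M]

lemma prod_filter_lt_eq_prod_Ioi [LocallyFiniteOrderTop α] (f : α → α → M) :
    ∏ p ∈ univ.filter (fun p : α × α => p.1 < p.2), f p.1 p.2 = ∏ i, ∏ j ∈ Ioi i, f i j := by
  rw [prod_filter, Fintype.prod_prod_type]
  refine prod_congr rfl fun i _ => ?_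
  rw [← prod_filter]
  congr 1
  ext j
  simp

lemma prod_filter_lt_eq_prod_Iio [LocallyFiniteOrderBot α] (f : α → α → M) :
    ∏ p ∈ univ.filter (fun p : α × α => p.1 < p.2), f p.1 p.2 = ∏ j, ∏ i ∈ Iio j, f i j := by
  rw [prod_filter, Fintype.prod_prod_type_right]
  refine prod_congr rfl fun j _ => ?_
  rw [← prod_filter]
  congr 1
  ext i
  simp

lemma prod_filter_le_eq_mul_prod_diag (f : α × α → M) :
    ∏ p ∈ univ.filter (fun p : α × α => p.1 ≤ p.2), f p
      = (∏ p ∈ univ.filter (fun p : α × α => p.1 < p.2), f p) * ∏ k, f (k, k) := by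
  simp only [le_iff_lt_or_eq, filter_or]
  rw [prod_union (disjoint_filter.2 fun p _ h => h.ne)]
  congr 1
  rw [prod_filter, Fintype.prod_prod_type]
  simp

end PairProducts

lemma one_sub_mul_mul_one_sub_mul {R : Type*} [CommRing R] {a a' b b' : R} (ha : a * a' = 1)
    (hb : b * b' = 1) : (1 - a * b') * (1 - a' * b') = b' * (b + b' - (a + a')) := by
  linear_combination b' ^ 2 * ha - hb

open AddMonoidAlgebra LaurentPolynomial

section CoeffPairing

variable {M K : Type*} [AddCommGroup K]

def coeffPairing (G : M → K) : ℤ[M] →ₗ[ℤ] K :=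
  Finsupp.linearCombination ℤ G ∘ₗ (coeffLinearEquiv ℤ).toLinearMap

lemma coeffPairing_apply (G : M → K) (p : ℤ[M]) :
    coeffPairing G p = ∑ γ ∈ p.coeff.support, p.coeff γ • G γ := rfl

lemma coeffPairing_eq_finsum (G : M → K) (p : ℤ[M]) :
    coeffPairing G p = ∑ᶠ γ, p.coeff γ • G γ := by
  rw [coeffPairing_apply]
  refine (finsum_eq_sum_of_support_subset _ fun γ hγ => ?_).symm
  exact Finsupp.mem_support_iff.2 fun h => hγ (by simp [h])

lemma coeffPairing_single (G : M → K) (γ : M) (c : ℤ) :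
    coeffPairing G (single γ c) = c • G γ := by
  simp [coeffPairing]

lemma coeffPairing_T (h : ℤ → K) (n : ℤ) : coeffPairing h (T n) = h n := by
  rw [T, coeffPairing_single, one_smul]

lemma coeffPairing_mul_one_sub_T (h : ℤ → K) (p : ℤ[T;T⁻¹]) (a : ℤ) :
    coeffPairing h (p * (1 - T (-a))) = coeffPairing (fun z => h z - h (z - a)) p := by
  induction p using AddMonoidAlgebra.induction_linear with
  | zero => simp
  | add p q hp hq => rw [add_mul, map_add, map_add, hp, hq]
  | single z c =>
    rw [mul_sub, mul_one, T, single_mul_single, mul_one, map_sub, coeffPairing_single,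
      coeffPairing_single, coeffPairing_single, smul_sub, ← sub_eq_add_neg]

end CoeffPairing

section CoordEmbed

variable {ι K : Type*} [DecidableEq ι]

/-- The ring embedding `ℤ[x^{±1}] → ℤ[x_k^{±1} : k ∈ ι]`, `x ↦ x_k`. -/
def coordEmbed (k : ι) : ℤ[T;T⁻¹] →+* ℤ[ι → ℤ] :=
  mapDomainRingHom ℤ (AddMonoidHom.single (fun _ => ℤ) k)

lemma coordEmbed_single (k : ι) (z c : ℤ) :
    coordEmbed k (single z c) = single (Pi.single k z) c := by
  rw [coordEmbed, mapDomainRingHom_apply, mapDomain_single]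
  rfl

variable [Fintype ι] [CommRing K]

lemma coeffPairing_prod_coordEmbed (G : ι → ℤ → K) (f : ι → ℤ[T;T⁻¹]) :
    coeffPairing (fun γ => ∏ k, G k (γ k)) (∏ k, coordEmbed k (f k))
      = ∏ k, coeffPairing (G k) (f k) := by
  have hembed : ∀ k, coordEmbed k (f k)
      = ∑ z ∈ (f k).coeff.support, single (Pi.single k z) ((f k).coeff z) := fun k => by
    conv_lhs => rw [← sum_coeff_single (f k)]
    simp only [Finsupp.sum, map_sum, coordEmbed_single]
  have hexpand : ∏ k, coordEmbed k (f k) = ∑ t ∈ Fintype.piFinset fun k => (f k).coeff.support,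
      single t (∏ k, (f k).coeff (t k)) := by
    simp only [hembed, Finset.prod_univ_sum, prod_single, Finset.univ_sum_single]
  simp only [coeffPairing_apply (G _), Finset.prod_univ_sum]
  rw [hexpand, map_sum]
  refine sum_congr rfl fun t _ => ?_
  simp only [coeffPairing_single, zsmul_eq_mul, Int.cast_prod, prod_mul_distrib]

lemma coeffPairing_det_coordEmbed (G : ι → ℤ → K) (A : Matrix ι ι ℤ[T;T⁻¹]) :
    coeffPairing (fun γ => ∏ k, G k (γ k)) (Matrix.of fun r j => coordEmbed r (A r j)).det
      = (Matrix.of fun r j => coeffPairing (G r) (A r j)).det := by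
  simp only [Matrix.det_apply, map_sum, Units.smul_def, map_zsmul]
  refine sum_congr rfl fun σ _ => ?_
  have key := coeffPairing_prod_coordEmbed G fun k => A k (σ.symm k)
  rw [← Equiv.prod_comp σ, ← Equiv.prod_comp σ (fun k => coeffPairing (G k) _)] at key
  simpa only [Equiv.symm_apply_apply, Matrix.of_apply] using congrArg _ key

end CoordEmbed

section PhiDeterminant

/-- `x^j + x^{-j}`, except `1` (rather than `2`) for `j = 0`, as in the first column of `v_β`. -/
def symmPow (j : ℕ) : ℤ[T;T⁻¹] := if j = 0 then 1 else T j + T (-j)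

def phiMatrix (m : ℕ) : Matrix (Fin m) (Fin m) ℤ[T;T⁻¹] :=
  .of fun r j => T (-(r : ℕ)) * symmPow j

variable {m : ℕ}

lemma eps_eq_pi_single (i : Fin m) : eps i = Pi.single i 1 := by
  funext j
  simp [eps, Pi.single_apply]

lemma XZ_add (a b : Wt m) : XZ (a + b) = XZ a * XZ b := by
  simp [XZ, single_mul_single]

lemma coordEmbed_T (k : Fin m) (n : ℤ) : coordEmbed k (T n) = XZ (Pi.single k n) :=
  coordEmbed_single k n 1

lemma coordEmbed_T_mul_T_neg (k : Fin m) (n : ℤ) :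
    coordEmbed k (T n) * coordEmbed k (T (-n)) = 1 := by
  rw [← map_mul, ← T_add, add_neg_cancel, T_zero, map_one]

lemma XZ_eps_sub_eps (i j : Fin m) :
    XZ (eps i - eps j) = coordEmbed i (T 1) * coordEmbed j (T (-1)) := by
  rw [coordEmbed_T, coordEmbed_T, ← XZ_add, eps_eq_pi_single, eps_eq_pi_single, Pi.single_neg,
    sub_eq_add_neg]

lemma XZ_neg_eps_add_eps (i j : Fin m) :
    XZ (-(eps i + eps j)) = coordEmbed i (T (-1)) * coordEmbed j (T (-1)) := by
  rw [coordEmbed_T, coordEmbed_T, ← XZ_add, eps_eq_pi_single, eps_eq_pi_single, Pi.single_neg,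
    Pi.single_neg, neg_add]

lemma one_sub_XZ_mul_one_sub_XZ (i j : Fin m) :
    (1 - XZ (eps i - eps j)) * (1 - XZ (-(eps i + eps j)))
      = coordEmbed j (T (-1)) * (coordEmbed j (T 1 + T (-1)) - coordEmbed i (T 1 + T (-1))) := by
  rw [XZ_eps_sub_eps, XZ_neg_eps_add_eps, map_add, map_add]
  exact one_sub_mul_mul_one_sub_mul (coordEmbed_T_mul_T_neg i 1) (coordEmbed_T_mul_T_neg j 1)

open Polynomial in
lemma det_coordEmbed_symmPow :
    (Matrix.of fun r j : Fin m => coordEmbed r (symmPow j)).det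
      = ∏ i, ∏ j ∈ Ioi i, (coordEmbed j (T 1 + T (-1)) - coordEmbed i (T 1 + T (-1))) := by
  let p : Fin m → (LZ m)[X] := fun j => if (j : ℕ) = 0 then 1 else dickson 1 1 j
  have hp : ∀ j, (p j).Monic ∧ (p j).natDegree = j := fun j => by
    rcases Nat.eq_zero_or_eq_succ_pred (j : ℕ) with h | h
    · simp [p, h]
    · simp only [p, if_neg (h ▸ Nat.succ_ne_zero _)]
      rw [h]
      exact (dickson_one_one_succ_monic_natDegree _).imp_right And.left
  rw [← Matrix.det_vandermonde, Matrix.det_eval_matrixOfPolynomials_eq_det_vandermonde _ p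
    (fun j => (hp j).2) (fun j => (hp j).1)]
  congr 1
  ext r j
  by_cases hj : (j : ℕ) = 0
  · simp [p, symmPow, hj]
  · simp only [Matrix.of_apply, p, symmPow, if_neg hj, map_add]
    rw [dickson_one_one_eval_add_inv _ _ (coordEmbed_T_mul_T_neg r 1), ← map_pow, ← map_pow,
      T_pow, T_pow]
    simp

lemma phiSmall_eq_det : phiSmall m = (Matrix.of fun r j => coordEmbed r (phiMatrix m r j)).det := by
  have hcol := Matrix.det_mul_column (fun r : Fin m => coordEmbed r (T (-(r : ℕ))))
    (.of fun r j : Fin m => coordEmbed r (symmPow j))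
  simp only [Matrix.of_apply] at hcol
  simp only [phiMatrix, Matrix.of_apply, map_mul]
  rw [hcol, det_coordEmbed_symmPow, phiSmall, ← prod_mul_distrib]
  simp only [one_sub_XZ_mul_one_sub_XZ]
  rw [prod_mul_distrib, prod_filter_lt_eq_prod_Iio (fun _ j => coordEmbed j (T (-1))),
    prod_filter_lt_eq_prod_Ioi
      (fun i j => coordEmbed j (T 1 + T (-1)) - coordEmbed i (T 1 + T (-1)))]
  congr 1
  refine prod_congr rfl fun j _ => ?_
  rw [prod_const, Fin.card_Iio, ← map_pow, T_pow]
  simp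

lemma phiBig_eq_det :
    phiBig m = (Matrix.of fun r j => coordEmbed r (phiMatrix m r j * (1 - T (-2)))).det := by
  have hcol := Matrix.det_mul_column (fun r : Fin m => coordEmbed r (1 - T (-2)))
    (.of fun r j : Fin m => coordEmbed r (phiMatrix m r j))
  simp only [Matrix.of_apply] at hcol
  simp only [map_mul, mul_comm _ (coordEmbed _ (1 - T (-2)))]
  rw [hcol, ← phiSmall_eq_det, phiBig, phiSmall, prod_filter_le_eq_mul_prod_diag, ← mul_assoc,
    mul_comm]
  congr 1
  refine prod_congr rfl fun k _ => ?_
  rw [XZ_neg_eps_add_eps, ← map_mul, ← T_add, map_sub, map_one]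
  norm_num

lemma coeffPairing_phiMatrix {K : Type*} [AddCommGroup K] (h : ℤ → K) (r j : Fin m) :
    coeffPairing h (phiMatrix m r j)
      = if (j : ℕ) = 0 then h (-(r : ℕ)) else h (j - (r : ℕ)) + h (-j - (r : ℕ)) := by
  by_cases hj : (j : ℕ) = 0
  · simp only [phiMatrix, symmPow, Matrix.of_apply, if_pos hj, mul_one, coeffPairing_T]
  · simp only [phiMatrix, symmPow, Matrix.of_apply, if_neg hj, mul_add, ← T_add, map_add,
      coeffPairing_T]
    ring_nf

end PhiDeterminant

lemma eF_of_neg (g : RT) (m : ℕ) {p : ℤ} (hp : p < 0) : eF g m p = 0 := by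
  rw [eF, if_neg (by omega), if_neg (by omega)]

lemma EF_sub_EF_sub_two (g : RT) (m : ℕ) (a : ℤ) : EF g m a - EF g m (a - 2) = eF g m a := by
  rcases lt_or_ge a 0 with ha | ha
  · rw [EF, EF, if_neg (by omega), if_neg (by omega), sub_self, eF_of_neg g m ha]
  rcases lt_or_ge a 2 with ha2 | ha2
  · have hrange : a.toNat / 2 + 1 = 1 := by omega
    rw [EF, EF, if_pos ha, if_neg (by omega), hrange, sum_range_one, sub_zero, Nat.cast_zero,
      mul_zero, sub_zero]
  · have hrange : a.toNat / 2 + 1 = (a - 2).toNat / 2 + 1 + 1 := by omega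
    rw [EF, EF, if_pos ha, if_pos (by omega), hrange, sum_range_succ']
    simp only [Nat.cast_add, Nat.cast_one, Nat.cast_zero, mul_zero, sub_zero, mul_add, mul_one,
      sub_add_eq_sub_sub, sub_right_comm a (2 * _) 2, add_sub_cancel_left]

lemma vDet_eq_det_coeffPairing {m : ℕ} (g : RT) (β : Wt m) :
    vDet g m β
      = (Matrix.of fun r j => coeffPairing (fun z => eF g m (β r + z)) (phiMatrix m r j)).det := by
  rw [vDet]
  congr 1
  ext r j
  rw [Matrix.of_apply, Matrix.of_apply, coeffPairing_phiMatrix]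
  split_ifs <;> ring_nf

theorem stmt5_general (m : ℕ) (g : RT) (β : Wt m) :
    vDet g m β = ∑ᶠ γ : Wt m, coeffSmall m γ • eProd g m (β + γ) ∧
    vDet g m β = ∑ᶠ γ : Wt m, coeffBig m γ • EProd g m (β + γ) := by
  have hsmall : vDet g m β = coeffPairing (fun γ => ∏ k, eF g m (β k + γ k)) (phiSmall m) := by
    rw [phiSmall_eq_det, vDet_eq_det_coeffPairing]
    exact (coeffPairing_det_coordEmbed (fun k z => eF g m (β k + z)) (phiMatrix m)).symm
  have hbig : vDet g m β = coeffPairing (fun γ => ∏ k, EF g m (β k + γ k)) (phiBig m) := by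
    have hE : ∀ r : Fin m, (fun z => EF g m (β r + z) - EF g m (β r + (z - 2)))
        = fun z => eF g m (β r + z) := fun r => funext fun z => by
      rw [← add_sub_assoc, EF_sub_EF_sub_two]
    rw [phiBig_eq_det, coeffPairing_det_coordEmbed (fun k z => EF g m (β k + z))
      fun r j => phiMatrix m r j * (1 - T (-2))]
    simp only [coeffPairing_mul_one_sub_T, hE]
    exact vDet_eq_det_coeffPairing g β
  exact ⟨hsmall.trans (coeffPairing_eq_finsum _ _), hbig.trans (coeffPairing_eq_finsum _ _)⟩

/-- With `a`, `A` the coefficient functions of `φ_m`, `Φ_m`, one has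
`v_β^g = Σ_γ a(γ) e^g_{β+γ}` and `v_β^g = Σ_γ A(γ) E^g_{β+γ}` for every `β ∈ ℤ^m`. -/
theorem stmt5 (m : ℕ) (hm : 1 ≤ m) (g : RT) (β : Wt m) :
    vDet g m β = ∑ᶠ γ : Wt m, coeffSmall m γ • eProd g m (β + γ) ∧
    vDet g m β = ∑ᶠ γ : Wt m, coeffBig m γ • EProd g m (β + γ) :=
  stmt5_general m g β

end
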